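/- Let α be a finite alphabet and a ∈ α. The language L = {ε, a} (containing only the empty word and the one-letter word a) is finite, suffix-closed, and commutative, but L is neither a star language nor a two-sided comet. -/

import Mathlib

open Language Computability

universe u

variable {α : Type}

/-- The n-fold repetition (power) of a word. -/
def wordPow (y : List α) : ℕ → List α
  | 0 => []
  | n + 1 => y ++ wordPow y n

/-- A star language: the Kleene star of some regular language. -/
def IsStarLang (L : Language α) : Prop :=
  ∃ H : Language α, H.IsRegular ∧ L = H∗

/-- A left-sided comet. -/
def IsLeftComet (L : Language α) : Prop :=
  ∃ E G : Language α, E.IsRegular ∧ G.IsRegular ∧ G ≠ 0 ∧ G ≠ 1 ∧ L = E * G∗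

/-- A right-sided comet. -/
def IsRightComet (L : Language α) : Prop :=
  ∃ G H : Language α, G.IsRegular ∧ H.IsRegular ∧ G ≠ 0 ∧ G ≠ 1 ∧ L = G∗ * H

/-- A two-sided comet. -/
def IsTwoComet (L : Language α) : Prop :=
  ∃ E G H : Language α, E.IsRegular ∧ G.IsRegular ∧ H.IsRegular ∧
    G ≠ 0 ∧ G ≠ 1 ∧ L = E * G∗ * H

/-- A regular expression is union-free if it is built from the atoms `0` (empty language)
and single letters using only concatenation and Kleene star. -/
def RegularExpression.UnionFree : RegularExpression α → Prop
  | RegularExpression.zero => True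
  | RegularExpression.epsilon => False
  | RegularExpression.char _ => True
  | RegularExpression.plus _ _ => False
  | RegularExpression.comp r s => r.UnionFree ∧ s.UnionFree
  | RegularExpression.star r => r.UnionFree

/-- A union-free language: the language of a union-free regular expression. -/
def IsUnionFree (L : Language α) : Prop :=
  ∃ r : RegularExpression α, r.UnionFree ∧ r.matches' = L

/-- A monoidal language. -/
def IsMonoidal (L : Language α) : Prop := L = (⊤ : Language α)

/-- The language of one-letter words with letters from `X`. -/
def lettersLang (X : Set α) : Language α := {w : List α | ∃ a ∈ X, w = [a]}

/-- A combinational language: `⊤ · X` for a set `X` of one-letter words. -/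
def IsCombinational (L : Language α) : Prop :=
  ∃ X : Set α, L = (⊤ : Language α) * lettersLang X

/-- A symmetric definite language: `E · ⊤ · H` with `E, H` regular. -/
def IsSymDef (L : Language α) : Prop :=
  ∃ E H : Language α, E.IsRegular ∧ H.IsRegular ∧ L = E * (⊤ : Language α) * H

/-- A nilpotent language: finite or with finite complement. -/
def IsNilpotentLang (L : Language α) : Prop := L.Finite ∨ (Lᶜ : Language α).Finite

/-- A definite language: `A ∪ ⊤ · B` with `A, B` finite. -/
def IsDefinite (L : Language α) : Prop :=
  ∃ A B : Language α, A.Finite ∧ B.Finite ∧ L = A + (⊤ : Language α) * B  -- `+` of languages is union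

/-- An ordered language: accepted by a DFA with linearly ordered state set
whose transition maps are all monotone. -/
def IsOrdered (L : Language α) : Prop :=
  ∃ (σ : Type) (_ : Fintype σ) (_ : LinearOrder σ) (M : DFA α σ),
    (∀ a : α, Monotone fun q => M.step q a) ∧ M.accepts = L

/-- The non-counting property. -/
def HasNonCounting (L : Language α) : Prop :=
  ∃ k : ℕ, 1 ≤ k ∧ ∀ x y z : List α,
    (x ++ wordPow y k ++ z ∈ L ↔ x ++ wordPow y (k + 1) ++ z ∈ L)

/-- A non-counting (star-free) regular language. -/
def IsNonCounting (L : Language α) : Prop := L.IsRegular ∧ HasNonCounting L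

/-- The power-separating property. -/
def HasPowerSep (L : Language α) : Prop :=
  ∃ m : ℕ, 1 ≤ m ∧ ∀ x : List α,
    (∀ n, m ≤ n → wordPow x n ∉ L) ∨ (∀ n, m ≤ n → wordPow x n ∈ L)

/-- A power-separating regular language. -/
def IsPowerSep (L : Language α) : Prop := L.IsRegular ∧ HasPowerSep L

/-- A suffix-closed (regular) language. -/
def IsSuffixClosed (L : Language α) : Prop :=
  L.IsRegular ∧ ∀ x y : List α, x ++ y ∈ L → y ∈ L

/-- A circular (regular) language. -/
def IsCircular (L : Language α) : Prop :=
  L.IsRegular ∧ ∀ u v : List α, u ++ v ∈ L → v ++ u ∈ L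

/-- A commutative (regular) language. -/
def IsCommutative (L : Language α) : Prop :=
  L.IsRegular ∧ ∀ w ∈ L, ∀ v : List α, w.Perm v → v ∈ L

/-- The reversal of a language. -/
def Reversal (L : Language α) : Language α := {w : List α | ∃ v ∈ L, w = v.reverse}

/-- Two families of languages are incomparable if neither is contained in the other. -/
def Incomparable (P Q : Language α → Prop) : Prop :=
  (∃ L : Language α, P L ∧ ¬ Q L) ∧ (∃ L : Language α, Q L ∧ ¬ P L)

/-- A finite language. -/
def IsFiniteLang (L : Language α) : Prop := L.Finite

/-!
A star language contains `ww` with each of its words `w`. So does `G∗`, which lies inside a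
two-sided comet `E·G∗·H` containing `ε` (then `ε ∈ E` and `ε ∈ H`), and `G ∉ {∅, {ε}}` puts a
nonempty word into `G∗`. But `{ε, a}` contains `a` and no nonempty word together with its square,
whose length is even.
-/

namespace Language

variable {β : Type*}

/-- Only prefixes of words of `L` have a nonempty left quotient, and a finite language has
finitely many prefixes. -/
theorem IsRegular.of_finite {L : Language β} (hL : L.Finite) : L.IsRegular := by
  refine .of_finite_range_leftQuotient <|
    ((hL.biUnion fun w _ => w.inits.finite_toSet).image L.leftQuotient).insert 0 |>.subset ?_
  rintro _ ⟨x, rfl⟩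
  by_cases hx : ∃ y, x ++ y ∈ L
  · obtain ⟨y, hy⟩ := hx
    exact .inr ⟨x, Set.mem_biUnion hy (List.mem_inits _ _ |>.mpr ⟨y, rfl⟩), rfl⟩
  · exact .inl (Set.eq_empty_iff_forall_notMem.mpr fun y hy => hx ⟨y, hy⟩)

theorem append_mem_kstar {l : Language β} {x y : List β} (hx : x ∈ l∗) (hy : y ∈ l∗) :
    x ++ y ∈ l∗ :=
  kstar_mul_kstar l ▸ append_mem_mul hx hy

theorem exists_ne_nil_mem_of_ne_zero_of_ne_one {l : Language β} (h0 : l ≠ 0) (h1 : l ≠ 1) :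
    ∃ w ∈ l, w ≠ [] := by
  by_contra! h
  obtain ⟨w, hw⟩ : Set.Nonempty l := Set.nonempty_iff_ne_empty.mpr h0
  exact h1 (Set.eq_singleton_iff_unique_mem.mpr ⟨h w hw ▸ hw, h⟩)

theorem kstar_le_mul_kstar_mul {E G H : Language β} (hE : [] ∈ E) (hH : [] ∈ H) :
    G∗ ≤ E * G∗ * H := fun w hw => by
  have := append_mem_mul (append_mem_mul hE hw) hH
  rwa [List.nil_append, List.append_nil] at this

end Language

theorem IsStarLang.append_self_mem {L : Language α} (hL : IsStarLang L) {w : List α}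
    (hw : w ∈ L) : w ++ w ∈ L := by
  obtain ⟨H, -, rfl⟩ := hL
  exact append_mem_kstar hw hw

theorem IsTwoComet.exists_ne_nil_append_self_mem {L : Language α} (hL : IsTwoComet L)
    (hnil : [] ∈ L) : ∃ w ∈ L, w ≠ [] ∧ w ++ w ∈ L := by
  obtain ⟨E, G, H, -, -, -, hG0, hG1, rfl⟩ := hL
  obtain ⟨⟨hE, -⟩, hH⟩ : ([] ∈ E ∧ [] ∈ G∗) ∧ [] ∈ H := by
    simpa [mem_mul] using hnil
  obtain ⟨g, hg, hg_ne⟩ := exists_ne_nil_mem_of_ne_zero_of_ne_one hG0 hG1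
  have hg_star : g ∈ G∗ := (le_kstar : G ≤ G∗) hg
  exact ⟨g, kstar_le_mul_kstar_mul hE hH hg_star, hg_ne,
    kstar_le_mul_kstar_mul hE hH (append_mem_kstar hg_star hg_star)⟩

theorem eq_nil_of_append_self_mem_nil_singleton {a : α} {w : List α}
    (hw : w ++ w ∈ ({[], [a]} : Language α)) : w = [] := by
  rcases hw with h | h
  · exact (List.append_eq_nil_iff.mp h).1
  · have := congrArg List.length h
    simp only [List.length_append, List.length_singleton] at this
    omega

theorem epsA_not_star_not_twoComet_general (a : α) :
    IsFiniteLang ({[], [a]} : Language α) ∧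
    IsSuffixClosed ({[], [a]} : Language α) ∧
    IsCommutative ({[], [a]} : Language α) ∧
    ¬ IsStarLang ({[], [a]} : Language α) ∧
    ¬ IsTwoComet ({[], [a]} : Language α) := by
  have hfin : ({[], [a]} : Language α).Finite := (Set.finite_singleton [a]).insert []
  refine ⟨hfin, ⟨.of_finite hfin, fun x y h => ?_⟩,
    ⟨.of_finite hfin, fun w hw v hv => ?_⟩, fun hS => ?_, fun hC => ?_⟩
  · rcases h with h | h
    · exact .inl (List.append_eq_nil_iff.mp h).2
    · rcases List.append_eq_singleton_iff.mp h with ⟨-, rfl⟩ | ⟨-, rfl⟩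
      exacts [.inr rfl, .inl rfl]
  · rcases hw with rfl | rfl
    exacts [.inl hv.nil_eq.symm, .inr (List.perm_singleton.mp hv.symm)]
  · exact List.cons_ne_nil a []
      (eq_nil_of_append_self_mem_nil_singleton (hS.append_self_mem (.inr rfl)))
  · obtain ⟨w, -, hw_ne, hww⟩ := hC.exists_ne_nil_append_self_mem (.inl rfl)
    exact hw_ne (eq_nil_of_append_self_mem_nil_singleton hww)

/-- `{ε, a}` is finite, suffix-closed and commutative, but neither a star language
nor a two-sided comet. -/
theorem epsA_not_star_not_twoComet [Fintype α] (a : α) :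
    IsFiniteLang ({[], [a]} : Language α) ∧
    IsSuffixClosed ({[], [a]} : Language α) ∧
    IsCommutative ({[], [a]} : Language α) ∧
    ¬ IsStarLang ({[], [a]} : Language α) ∧
    ¬ IsTwoComet ({[], [a]} : Language α) :=
  epsA_not_star_not_twoComet_general a
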